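/- Let I ⊆ S be such that the standard parabolic subgroup W_I is finite, and let w_I be the longest element of W_I. Then the structure constant f_{w_I, w_I, w_I}, as a polynomial in ξ, has degree exactly l(w_I). -/

import Mathlib

/-!
The Hecke algebra `H` of a Coxeter system `(W, S)` over `A = ℤ[q^{1/2}, q^{-1/2}]`.
We model `A` as `LaurentPolynomial ℤ`, with the Laurent variable `T 1` playing the role
of `q^{1/2}` (so `q = T 2`).  The Hecke algebra is axiomatized as an `A`-algebra `H`
together with an `A`-basis `TT = (T_w)_{w ∈ W}` satisfying the defining relations
`(T_s - q)(T_s + 1) = 0` and `T_w T_u = T_{wu}` whenever `l(wu) = l(w) + l(u)`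
(and `T_1 = 1`).
-/

noncomputable section

/-- `q = (q^{1/2})^2` in `A = ℤ[q^{1/2}, q^{-1/2}]`. -/
def heckeQ : LaurentPolynomial ℤ := LaurentPolynomial.T 2

/-- `ξ = q^{1/2} - q^{-1/2}` in `A = ℤ[q^{1/2}, q^{-1/2}]`. -/
def heckeXi : LaurentPolynomial ℤ := LaurentPolynomial.T 1 - LaurentPolynomial.T (-1)

variable {B W H : Type*} [Group W] [Ring H] [Algebra (LaurentPolynomial ℤ) H]
  {M : CoxeterMatrix B}

/-- The hypothesis that `TT` is the standard basis `(T_w)_{w ∈ W}` of the Hecke algebra `H`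
of the Coxeter system `cs`. -/
def IsHeckeBasis (cs : CoxeterSystem M W) (TT : Module.Basis W (LaurentPolynomial ℤ) H) : Prop :=
  TT 1 = 1 ∧
  (∀ i : B, (TT (cs.simple i) - algebraMap (LaurentPolynomial ℤ) H heckeQ) *
    (TT (cs.simple i) + 1) = 0) ∧
  (∀ w u : W, cs.length (w * u) = cs.length w + cs.length u → TT w * TT u = TT (w * u))

/-- `T̃_w = q^{-l(w)/2} T_w`. -/
def Ttilde (cs : CoxeterSystem M W) (TT : Module.Basis W (LaurentPolynomial ℤ) H) (w : W) : H :=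
  (LaurentPolynomial.T (-(cs.length w : ℤ)) : LaurentPolynomial ℤ) • TT w

/-- The structure constants `f_{w,u,v} ∈ A` defined by `T̃_w T̃_u = Σ_v f_{w,u,v} T̃_v`;
equivalently, `f_{w,u,v}` is `q^{l(v)/2}` times the coordinate of `T̃_w T̃_u` at `T_v`. -/
def heckeF (cs : CoxeterSystem M W) (TT : Module.Basis W (LaurentPolynomial ℤ) H) (w u v : W) :
    LaurentPolynomial ℤ :=
  (LaurentPolynomial.T (cs.length v : ℤ) : LaurentPolynomial ℤ) *
    TT.repr (Ttilde cs TT w * Ttilde cs TT u) v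

end

/-!
In the basis `T̃_w` one has `T̃_w T̃_s = T̃_{ws} + [ws < w] ξ T̃_w`. Hence, if `l(vs) = l(v) + 1`,
`f_{x,vs,w} = f_{x,v,ws} + [ws < w] ξ f_{x,v,w}`, and along a reduced word for `v` the constant
`f_{x,v,w}` is a polynomial in `ξ` of degree at most `l(v)`. If moreover every letter `s` of the
word is a right descent of `x`, the `ξ`-term is present at every step for `w = x`, so
`f_{x,v,x}` is monic of degree `l(v)`. Every `s ∈ I` is a right descent of the longest element
`w_I`, and `w_I` has a reduced word in the letters of `I` by the deletion property, which we
derive from Tits' sign representation.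
-/

theorem conj_eq_iff_eq_conj_inv {G : Type*} [Group G] {c t y : G} :
    c * t * c⁻¹ = y ↔ t = c⁻¹ * y * c :=
  ⟨fun h => by rw [← h]; group, fun h => by rw [h]; group⟩

namespace CoxeterSystem

open scoped Classical

variable {B W : Type*} [Group W] {M : CoxeterMatrix B} (cs : CoxeterSystem M W)

local prefix:100 "s" => cs.simple
local prefix:100 "π" => cs.wordProd
local prefix:100 "ris" => cs.rightInvSeq

theorem simple_mul_mul_simple_eq_iff {i : B} {t y : W} :
    s i * t * s i = y ↔ t = s i * y * s i := by
  simpa only [cs.inv_simple] using conj_eq_iff_eq_conj_inv (c := s i) (t := t) (y := y)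

noncomputable def simpleSignPerm (i : B) : Equiv.Perm (W × ℤˣ) :=
  Function.Involutive.toPerm (fun p => (s i * p.1 * s i, if p.1 = s i then -p.2 else p.2)) <| by
    rintro ⟨t, e⟩
    refine Prod.ext (by simp [mul_assoc, cs.simple_mul_simple_cancel_left]) ?_
    simp only [cs.simple_mul_mul_simple_eq_iff, cs.simple_mul_simple_self, one_mul]
    split_ifs <;> simp

theorem simpleSignPerm_apply (i : B) (t : W) (e : ℤˣ) :
    cs.simpleSignPerm i (t, e) = (s i * t * s i, if t = s i then -e else e) := rfl

theorem inv_pow_mul_simple (i i' : B) (k : ℕ) :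
    ((s i * s i') ^ k)⁻¹ * s i' = s i' * (s i * s i') ^ k := by
  have h : SemiconjBy (s i') (s i * s i') (s i * s i')⁻¹ := by
    rw [SemiconjBy, mul_inv_rev, cs.inv_simple, cs.inv_simple, mul_assoc]
  rw [← inv_pow, (h.pow_right k).eq]

theorem conj_pow_eq_simple_iff (i i' : B) (k : ℕ) (t : W) :
    (s i * s i') ^ k * t * ((s i * s i') ^ k)⁻¹ = s i' ↔
      t = s i' * (s i * s i') ^ (2 * k) := by
  rw [conj_eq_iff_eq_conj_inv, cs.inv_pow_mul_simple, mul_assoc, ← pow_add, two_mul]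

theorem simple_mul_conj_pow_eq_simple_iff (i i' : B) (k : ℕ) (t : W) :
    s i' * ((s i * s i') ^ k * t * ((s i * s i') ^ k)⁻¹) * s i' = s i ↔
      t = s i' * (s i * s i') ^ (2 * k + 1) := by
  rw [simple_mul_mul_simple_eq_iff, conj_eq_iff_eq_conj_inv, mul_assoc _ (s i),
    ← mul_assoc _ (s i'),
    cs.inv_pow_mul_simple, mul_assoc, mul_assoc, ← pow_succ', ← pow_add]
  ring_nf

theorem simpleSignPerm_mul_pow (i i' : B) (k : ℕ) (t : W) (e : ℤˣ) :
    ((cs.simpleSignPerm i * cs.simpleSignPerm i') ^ k) (t, e) =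
      ((s i * s i') ^ k * t * ((s i * s i') ^ k)⁻¹,
        e * ∏ j ∈ Finset.range (2 * k), if t = s i' * (s i * s i') ^ j then -1 else 1) := by
  induction k with
  | zero => simp
  | succ k ih =>
    rw [pow_succ', Equiv.Perm.mul_apply, ih, Equiv.Perm.mul_apply, simpleSignPerm_apply,
      simpleSignPerm_apply, conj_pow_eq_simple_iff, simple_mul_conj_pow_eq_simple_iff,
      mul_add_one, Finset.prod_range_succ, Finset.prod_range_succ]
    refine Prod.ext ?_ ?_
    · simp only [pow_succ', mul_inv_rev, cs.inv_simple, mul_assoc]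
    · split_ifs <;> simp [mul_comm]

theorem isLiftable_simpleSignPerm : M.IsLiftable cs.simpleSignPerm := by
  intro i i'
  ext ⟨t, e⟩
  · simp [simpleSignPerm_mul_pow, cs.simple_mul_simple_pow]
  · have hperiodic (j : ℕ) : s i' * (s i * s i') ^ (M i i' + j) = s i' * (s i * s i') ^ j := by
      rw [pow_add, cs.simple_mul_simple_pow, one_mul]
    simp only [simpleSignPerm_mul_pow, two_mul, Finset.prod_range_add, hperiodic,
      Int.units_mul_self, mul_one, Equiv.Perm.one_apply]

/-- Tits' sign representation. -/
noncomputable def signRep : W →* Equiv.Perm (W × ℤˣ) :=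
  cs.lift ⟨cs.simpleSignPerm, cs.isLiftable_simpleSignPerm⟩

theorem signRep_wordProd (ω : List B) (t : W) (e : ℤˣ) :
    cs.signRep (π ω) (t, e) = (π ω * t * (π ω)⁻¹, e * (-1) ^ (ris ω).count t) := by
  induction ω generalizing e with
  | nil => simp
  | cons i ω ih =>
    have hris : ris (i :: ω) = (π ω)⁻¹ * s i * π ω :: ris ω := rfl
    rw [cs.wordProd_cons, map_mul, Equiv.Perm.mul_apply, ih, signRep, cs.lift_apply_simple,
      simpleSignPerm_apply, hris, List.count_cons, conj_eq_iff_eq_conj_inv]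
    refine Prod.ext (by simp only [mul_inv_rev, cs.inv_simple, mul_assoc]) ?_
    simp only [beq_iff_eq, eq_comm (b := t)]
    split_ifs <;> simp [pow_succ]

theorem neg_one_pow_count_rightInvSeq_eq {ω ω' : List B} (h : π ω = π ω') (t : W) :
    (-1 : ℤˣ) ^ (ris ω).count t = (-1) ^ (ris ω').count t := by
  have h' := cs.signRep_wordProd ω t 1
  rw [h, cs.signRep_wordProd ω' t 1] at h'
  simpa using (congrArg Prod.snd h').symm

/-- The exchange property, for words that need not be reduced. -/
theorem simple_mem_rightInvSeq_of_isRightDescent {ω : List B} {i : B}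
    (h : cs.IsRightDescent (π ω) i) : s i ∈ ris ω := by
  obtain ⟨τ, hτ, hτω⟩ := cs.exists_isReduced (π ω * s i)
  have hprod : π (τ.concat i) = π ω := by
    rw [wordProd_concat, ← hτω, simple_mul_simple_cancel_right]
  have hred : cs.IsReduced (τ.concat i) := by
    rw [IsReduced, hprod, List.length_concat, ← hτ.eq, ← hτω, (cs.isRightDescent_iff).mp h]
  have hmem : s i ∈ ris (τ.concat i) := by
    rw [rightInvSeq_concat, List.concat_eq_append]
    exact List.mem_append_right _ (List.mem_singleton_self _)
  by_contra hnot
  have hsign := cs.neg_one_pow_count_rightInvSeq_eq hprod (s i)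
  rw [List.count_eq_one_of_mem hred.nodup_rightInvSeq hmem, List.count_eq_zero.mpr hnot] at hsign
  exact absurd hsign (by decide)

theorem isReduced_append_singleton_iff {ω : List B} {i : B} :
    cs.IsReduced (ω ++ [i]) ↔ cs.IsReduced ω ∧ ¬cs.IsRightDescent (π ω) i := by
  rw [not_isRightDescent_iff]
  constructor
  · intro h
    have hω : cs.IsReduced ω := by simpa using h.take ω.length
    refine ⟨hω, ?_⟩
    have hlen := h.eq
    rw [wordProd_append, wordProd_singleton, List.length_append, List.length_singleton] at hlen
    rw [hlen, hω.eq]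
  · rintro ⟨hω, hi⟩
    rw [IsReduced, wordProd_append, wordProd_singleton, hi, hω.eq, List.length_append,
      List.length_singleton]

theorem exists_wordProd_mul_simple_eq_eraseIdx {ω : List B} {i : B}
    (h : cs.IsRightDescent (π ω) i) : ∃ j < ω.length, π ω * s i = π (ω.eraseIdx j) := by
  obtain ⟨j, hj, hjth⟩ :=
    List.mem_iff_getElem.mp (cs.simple_mem_rightInvSeq_of_isRightDescent h)
  rw [length_rightInvSeq] at hj
  refine ⟨j, hj, ?_⟩
  rw [← wordProd_mul_getD_rightInvSeq, List.getD_eq_getElem _ _ (by simpa using hj), hjth]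

/-- The deletion property. -/
theorem exists_isReduced_sublist (ω : List B) :
    ∃ ω' : List B, ω'.Sublist ω ∧ cs.IsReduced ω' ∧ π ω' = π ω := by
  induction ω using List.reverseRecOn with
  | nil => exact ⟨[], List.Sublist.slnil, by simp [IsReduced], rfl⟩
  | append_singleton ω i ih =>
    obtain ⟨τ, hτω, hτ, hτprod⟩ := ih
    rw [wordProd_append, wordProd_singleton, ← hτprod]
    by_cases hdesc : cs.IsRightDescent (π τ) i
    · obtain ⟨j, hj, hjprod⟩ := cs.exists_wordProd_mul_simple_eq_eraseIdx hdesc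
      refine ⟨τ.eraseIdx j, ((List.eraseIdx_sublist τ j).trans hτω).trans
        (List.sublist_append_left ω [i]), ?_, hjprod.symm⟩
      have hlen := List.length_eraseIdx_add_one hj
      have hdrop := cs.isRightDescent_iff.mp hdesc
      rw [hτ.eq] at hdrop
      rw [IsReduced, ← hjprod]
      omega
    · exact ⟨τ ++ [i], hτω.append (List.Sublist.refl [i]),
        cs.isReduced_append_singleton_iff.mpr ⟨hτ, hdesc⟩, by simp [wordProd_append]⟩

theorem exists_wordProd_eq_of_mem_closure {I : Set B} {w : W}
    (h : w ∈ Subgroup.closure (cs.simple '' I)) :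
    ∃ ω : List B, (∀ i ∈ ω, i ∈ I) ∧ π ω = w := by
  induction h using Subgroup.closure_induction with
  | mem _ hw =>
    obtain ⟨i, hi, rfl⟩ := hw
    exact ⟨[i], by simpa using hi, wordProd_singleton cs i⟩
  | one => exact ⟨[], by simp, wordProd_nil cs⟩
  | mul _ _ _ _ ih ih' =>
    obtain ⟨ω, hω, rfl⟩ := ih
    obtain ⟨ω', hω', rfl⟩ := ih'
    exact ⟨ω ++ ω', by simpa using fun i => Or.rec (hω i) (hω' i),
      wordProd_append cs ω ω'⟩
  | inv _ _ ih =>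
    obtain ⟨ω, hω, rfl⟩ := ih
    exact ⟨ω.reverse, by simpa using hω, wordProd_reverse cs ω⟩

theorem exists_isReduced_of_mem_closure {I : Set B} {w : W}
    (h : w ∈ Subgroup.closure (cs.simple '' I)) :
    ∃ ω : List B, (∀ i ∈ ω, i ∈ I) ∧ cs.IsReduced ω ∧ π ω = w := by
  obtain ⟨ω, hωI, rfl⟩ := cs.exists_wordProd_eq_of_mem_closure h
  obtain ⟨ω', hω'ω, hω', hprod⟩ := cs.exists_isReduced_sublist ω
  exact ⟨ω', fun i hi => hωI i (hω'ω.subset hi), hω', hprod⟩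

end CoxeterSystem

section tildeBasis

open LaurentPolynomial

variable {B W H : Type*} [Group W] [Ring H] [Algebra (LaurentPolynomial ℤ) H]
  {M : CoxeterMatrix B} (cs : CoxeterSystem M W) (TT : Module.Basis W (LaurentPolynomial ℤ) H)

noncomputable def tildeBasis : Module.Basis W (LaurentPolynomial ℤ) H :=
  TT.unitsSMul fun w => ⟨T (-cs.length w), T (cs.length w),
    by rw [← T_add, neg_add_cancel, T_zero], by rw [← T_add, add_neg_cancel, T_zero]⟩

theorem tildeBasis_apply (w : W) : tildeBasis cs TT w = Ttilde cs TT w :=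
  TT.unitsSMul_apply w

theorem tildeBasis_repr_Ttilde (w : W) :
    (tildeBasis cs TT).repr (Ttilde cs TT w) = Finsupp.single w 1 := by
  rw [← tildeBasis_apply, Module.Basis.repr_self]

theorem heckeF_eq_tildeBasis_repr (w u v : W) :
    heckeF cs TT w u v = (tildeBasis cs TT).repr (Ttilde cs TT w * Ttilde cs TT u) v := by
  simp [heckeF, tildeBasis, Units.smul_def]

end tildeBasis

namespace IsHeckeBasis

open LaurentPolynomial CoxeterSystem Polynomial
open scoped Classical

variable {B W H : Type*} [Group W] [Ring H] [Algebra (LaurentPolynomial ℤ) H]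
  {M : CoxeterMatrix B} {cs : CoxeterSystem M W} {TT : Module.Basis W (LaurentPolynomial ℤ) H}

theorem Ttilde_one (hT : IsHeckeBasis cs TT) : Ttilde cs TT 1 = 1 := by
  rw [Ttilde, cs.length_one, Nat.cast_zero, neg_zero, T_zero, one_smul, hT.1]

theorem Ttilde_mul_simple_of_not_isRightDescent (hT : IsHeckeBasis cs TT) {u : W} {i : B}
    (h : ¬cs.IsRightDescent u i) :
    Ttilde cs TT u * Ttilde cs TT (cs.simple i) = Ttilde cs TT (u * cs.simple i) := by
  have hlen := cs.not_isRightDescent_iff.mp h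
  rw [Ttilde, Ttilde, Ttilde, smul_mul_smul_comm, hT.2.2 _ _ (by rw [hlen, cs.length_simple]),
    ← T_add, hlen, cs.length_simple]
  congr 2
  push_cast
  ring

theorem Ttilde_simple_mul_self (hT : IsHeckeBasis cs TT) (i : B) :
    Ttilde cs TT (cs.simple i) * Ttilde cs TT (cs.simple i) =
      1 + heckeXi • Ttilde cs TT (cs.simple i) := by
  have hquad : TT (cs.simple i) * TT (cs.simple i) =
      heckeQ • TT (cs.simple i) - TT (cs.simple i) + heckeQ • 1 := by
    have h := hT.2.1 i
    rw [Algebra.algebraMap_eq_smul_one] at h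
    rw [← sub_eq_zero, ← h]
    simp only [sub_mul, mul_add, smul_mul_assoc, one_mul, mul_one]
    abel
  rw [Ttilde, cs.length_simple, smul_mul_smul_comm, hquad, heckeXi, heckeQ]
  simp only [smul_add, smul_sub, smul_smul, sub_mul, ← T_add, sub_smul]
  norm_num
  abel

theorem Ttilde_mul_simple (hT : IsHeckeBasis cs TT) (u : W) (i : B) :
    Ttilde cs TT u * Ttilde cs TT (cs.simple i) =
      Ttilde cs TT (u * cs.simple i) +
        if cs.IsRightDescent u i then heckeXi • Ttilde cs TT u else 0 := by
  split_ifs with h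
  · have hu : Ttilde cs TT (u * cs.simple i) * Ttilde cs TT (cs.simple i) = Ttilde cs TT u := by
      rw [hT.Ttilde_mul_simple_of_not_isRightDescent
        (cs.isRightDescent_iff_not_isRightDescent_mul.mp h), simple_mul_simple_cancel_right]
    rw [← hu, mul_assoc, hT.Ttilde_simple_mul_self, mul_add, mul_one, mul_smul_comm]
  · rw [hT.Ttilde_mul_simple_of_not_isRightDescent h, add_zero]

theorem tildeBasis_repr_mul_Ttilde_simple (hT : IsHeckeBasis cs TT) (x : H) (w : W) (i : B) :
    (tildeBasis cs TT).repr (x * Ttilde cs TT (cs.simple i)) w =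
      (tildeBasis cs TT).repr x (w * cs.simple i) +
        if cs.IsRightDescent w i then heckeXi * (tildeBasis cs TT).repr x w else 0 := by
  have key : Finsupp.lapply w ∘ₗ (tildeBasis cs TT).repr.toLinearMap ∘ₗ
        LinearMap.mulRight (LaurentPolynomial ℤ) (Ttilde cs TT (cs.simple i)) =
      Finsupp.lapply (w * cs.simple i) ∘ₗ (tildeBasis cs TT).repr.toLinearMap +
        (if cs.IsRightDescent w i then heckeXi else 0) •
          (Finsupp.lapply w ∘ₗ (tildeBasis cs TT).repr.toLinearMap) := by
    refine (tildeBasis cs TT).ext fun u => ?_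
    simp only [LinearMap.comp_apply, LinearMap.mulRight_apply, LinearEquiv.coe_coe,
      Finsupp.lapply_apply, LinearMap.add_apply, LinearMap.smul_apply, smul_eq_mul]
    rw [tildeBasis_apply, hT.Ttilde_mul_simple, map_add, Finsupp.add_apply, tildeBasis_repr_Ttilde,
      tildeBasis_repr_Ttilde]
    by_cases hu : u = w
    · subst hu
      have hne : u * cs.simple i ≠ u := fun h => cs.length_mul_simple_ne u i (congrArg _ h)
      split_ifs <;> simp [tildeBasis_repr_Ttilde, hne]
    · have hiff : u * cs.simple i = w ↔ u = w * cs.simple i := by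
        rw [← mul_inv_eq_iff_eq_mul, cs.inv_simple]
      split_ifs <;> simp [tildeBasis_repr_Ttilde, Finsupp.single_apply, hu, hiff]
  have := LinearMap.congr_fun key x
  split_ifs at this ⊢ <;> simpa using this

theorem heckeF_one (hT : IsHeckeBasis cs TT) (x w : W) :
    heckeF cs TT x 1 w = if x = w then 1 else 0 := by
  rw [heckeF_eq_tildeBasis_repr, hT.Ttilde_one, mul_one, tildeBasis_repr_Ttilde,
    Finsupp.single_apply]

theorem heckeF_mul_simple (hT : IsHeckeBasis cs TT) (x : W) {v : W} {i : B}
    (hv : ¬cs.IsRightDescent v i) (w : W) :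
    heckeF cs TT x (v * cs.simple i) w =
      heckeF cs TT x v (w * cs.simple i) +
        if cs.IsRightDescent w i then heckeXi * heckeF cs TT x v w else 0 := by
  simp only [heckeF_eq_tildeBasis_repr, ← hT.Ttilde_mul_simple_of_not_isRightDescent hv,
    ← mul_assoc, hT.tildeBasis_repr_mul_Ttilde_simple]

theorem exists_natDegree_le_heckeF (hT : IsHeckeBasis cs TT) (x : W) {ω : List B}
    (hω : cs.IsReduced ω) (w : W) :
    ∃ p : Polynomial ℤ, p.natDegree ≤ ω.length ∧
      aeval heckeXi p = heckeF cs TT x (cs.wordProd ω) w := by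
  induction ω using List.reverseRecOn generalizing w with
  | nil =>
    refine ⟨if x = w then 1 else 0, by split_ifs <;> simp, ?_⟩
    rw [wordProd_nil, hT.heckeF_one]
    split_ifs <;> simp
  | append_singleton ω i ih =>
    obtain ⟨hω, hi⟩ := cs.isReduced_append_singleton_iff.mp hω
    obtain ⟨p, hp, hpf⟩ := ih hω (w * cs.simple i)
    obtain ⟨r, hr, hrf⟩ := ih hω w
    refine ⟨p + if cs.IsRightDescent w i then X * r else 0, ?_, ?_⟩
    · rw [List.length_append, List.length_singleton]
      refine natDegree_add_le_of_degree_le (hp.trans (Nat.le_succ _)) ?_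
      split_ifs
      · exact natDegree_mul_le.trans (by rw [natDegree_X]; omega)
      · simp
    · rw [wordProd_append, wordProd_singleton, hT.heckeF_mul_simple x hi, map_add, hpf]
      split_ifs <;> simp [hrf]

theorem exists_monic_heckeF_self (hT : IsHeckeBasis cs TT) {x : W} {ω : List B}
    (hω : cs.IsReduced ω) (hdesc : ∀ i ∈ ω, cs.IsRightDescent x i) :
    ∃ p : Polynomial ℤ, p.Monic ∧ p.natDegree = ω.length ∧
      aeval heckeXi p = heckeF cs TT x (cs.wordProd ω) x := by
  induction ω using List.reverseRecOn with
  | nil => exact ⟨1, monic_one, natDegree_one, by simp [hT.heckeF_one]⟩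
  | append_singleton ω i ih =>
    obtain ⟨hω, hi⟩ := cs.isReduced_append_singleton_iff.mp hω
    obtain ⟨p, hp, hpf⟩ := hT.exists_natDegree_le_heckeF x hω (x * cs.simple i)
    obtain ⟨r, hr, hrdeg, hrf⟩ := ih hω fun j hj => hdesc j (List.mem_append_left _ hj)
    have hXr : (X * r).natDegree = ω.length + 1 := by
      rw [natDegree_X_mul hr.ne_zero, hrdeg]
    have hlt : p.natDegree < (X * r).natDegree := by omega
    refine ⟨p + X * r, (monic_X.mul hr).add_of_right
      (degree_lt_degree hlt), ?_, ?_⟩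
    · rw [natDegree_add_eq_right_of_natDegree_lt hlt, hXr, List.length_append,
        List.length_singleton]
    · rw [wordProd_append, wordProd_singleton, hT.heckeF_mul_simple x hi,
        if_pos (hdesc i (by simp)), map_add, map_mul, aeval_X, hpf, hrf]

end IsHeckeBasis

theorem stmt_13_general {B W H : Type*} [Group W] [Ring H] [Algebra (LaurentPolynomial ℤ) H]
    {M : CoxeterMatrix B} (cs : CoxeterSystem M W)
    (TT : Module.Basis W (LaurentPolynomial ℤ) H) (hT : IsHeckeBasis cs TT)
    (I : Set B)
    (wI : W) (hmem : wI ∈ Subgroup.closure (cs.simple '' I))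
    (hmax : ∀ u ∈ Subgroup.closure (cs.simple '' I), cs.length u ≤ cs.length wI) :
    ∃ p : Polynomial ℤ, p.degree = (cs.length wI : WithBot ℕ) ∧
      Polynomial.aeval heckeXi p = heckeF cs TT wI wI wI := by
  obtain ⟨ω, hωI, hω, rfl⟩ := cs.exists_isReduced_of_mem_closure hmem
  have hdesc : ∀ i ∈ ω, cs.IsRightDescent (cs.wordProd ω) i := fun i hi =>
    lt_of_le_of_ne (hmax _ (mul_mem hmem (Subgroup.subset_closure ⟨i, hωI i hi, rfl⟩)))
      (cs.length_mul_simple_ne _ i)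
  obtain ⟨p, hp, hpdeg, hpf⟩ := hT.exists_monic_heckeF_self hω hdesc
  exact ⟨p, by rw [Polynomial.degree_eq_natDegree hp.ne_zero, hpdeg, hω.eq], hpf⟩

/-- Let `I ⊆ S` be such that the standard parabolic subgroup `W_I` is finite,
and let `w_I` be the longest element of `W_I`.  Then `f_{w_I, w_I, w_I}`, as a polynomial in
`ξ`, has degree exactly `l(w_I)`. -/
theorem stmt_13 {B W H : Type*} [Group W] [Ring H] [Algebra (LaurentPolynomial ℤ) H]
    {M : CoxeterMatrix B} (cs : CoxeterSystem M W)
    (TT : Module.Basis W (LaurentPolynomial ℤ) H) (hT : IsHeckeBasis cs TT)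
    (I : Set B) (hfin : (Subgroup.closure (cs.simple '' I) : Set W).Finite)
    (wI : W) (hmem : wI ∈ Subgroup.closure (cs.simple '' I))
    (hmax : ∀ u ∈ Subgroup.closure (cs.simple '' I), cs.length u ≤ cs.length wI) :
    ∃ p : Polynomial ℤ, p.degree = (cs.length wI : WithBot ℕ) ∧
      Polynomial.aeval heckeXi p = heckeF cs TT wI wI wI :=
  stmt_13_general cs TT hT I wI hmem hmax
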